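/- arXiv:2108.07342 — 2 statements merged into one kernel-verified Lean document; each statement's English description precedes it below -/
import Mathlib

section
/- F is differentiable at every tensor M ∈ ℝ^{S^{T+1}}, and its gradient is ∇F(M) = C(M) + E(M), where E(M)(x_0,…,x_T) = Σ_{i=0}^{T−1} E_i(x_i) with E_i(y) = Σ_{(z,w)∈S×S} ∇W(z − y)ᵀ (w − z + (1/T)[∇W * P_i(M)](z)) · P_{i,i+1}(M)(z,w). -/
/-!
`F` is a polynomial in the entries of `M`: the cost `C(M)` depends on `M` only through the
convolutions `∇W * P_i(M)`, which are linear in `M`. The product rule for `⟨C(M), M⟩` gives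
the gradient `C(M)(y) + Σ_x M(x) ∂C(M)(x)/∂M(y)`, and differentiating `(T/2)‖·‖²` through
the linear factor `1/T` gives
`∂C(M)(x)/∂M(y) = Σ_i ∇W(x_i - y_i) · (x_{i+1} - x_i + (1/T)[∇W * P_i(M)](x_i))`.
Summing against `M` and grouping the paths by `(x_i, x_{i+1})` turns the second term
into `E(M)(y)`.
-/

open scoped BigOperators Classical

noncomputable section

namespace Stmt0

variable {d T : ℕ} {S : Finset (EuclideanSpace ℝ (Fin d))}

/-- The `i`-th marginal `P_i(M)(y) = Σ_{x : x_i = y} M(x)` of a tensor on `S^{T+1}`. -/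
def marg (M : (Fin (T + 1) → {x // x ∈ S}) → ℝ) (i : Fin (T + 1)) (y : {x // x ∈ S}) : ℝ :=
  ∑ x : Fin (T + 1) → {x // x ∈ S}, if x i = y then M x else 0

/-- The pairwise marginal `P_{i,i+1}(M)(y,z) = Σ_{x : x_i = y, x_{i+1} = z} M(x)`. -/
def margPair (M : (Fin (T + 1) → {x // x ∈ S}) → ℝ) (i : Fin T) (y z : {x // x ∈ S}) : ℝ :=
  ∑ x : Fin (T + 1) → {x // x ∈ S}, if x i.castSucc = y ∧ x i.succ = z then M x else 0

/-- The discrete convolution `[∇W * P_i(M)](y) = Σ_{z ∈ S} ∇W(y - z) P_i(M)(z)`. -/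
def convW (W : EuclideanSpace ℝ (Fin d) → ℝ) (M : (Fin (T + 1) → {x // x ∈ S}) → ℝ)
    (i : Fin (T + 1)) (y : EuclideanSpace ℝ (Fin d)) : EuclideanSpace ℝ (Fin d) :=
  ∑ z : {x // x ∈ S}, marg M i z • gradient W (y - (z : EuclideanSpace ℝ (Fin d)))

/-- The cost tensor
`C(M)(x_0,…,x_T) = Σ_{i=0}^{T-1} (T/2) ‖x_{i+1} - x_i + (1/T)[∇W * P_i(M)](x_i)‖²`. -/
def costC (W : EuclideanSpace ℝ (Fin d) → ℝ) (M : (Fin (T + 1) → {x // x ∈ S}) → ℝ)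
    (x : Fin (T + 1) → {x // x ∈ S}) : ℝ :=
  ∑ i : Fin T, ((T : ℝ) / 2) *
    ‖(x i.succ : EuclideanSpace ℝ (Fin d)) - (x i.castSucc : EuclideanSpace ℝ (Fin d))
      + (1 / (T : ℝ)) • convW W M i.castSucc (x i.castSucc : EuclideanSpace ℝ (Fin d))‖ ^ 2

/-- `F(M) = ⟨C(M), M⟩ = Σ_x C(M)(x) M(x)`. -/
def Ffun (W : EuclideanSpace ℝ (Fin d) → ℝ) (M : (Fin (T + 1) → {x // x ∈ S}) → ℝ) : ℝ :=
  ∑ x : Fin (T + 1) → {x // x ∈ S}, costC W M x * M x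

/-- `E_i(y) = Σ_{(z,w) ∈ S×S} ∇W(z-y)ᵀ (w - z + (1/T)[∇W * P_i(M)](z)) P_{i,i+1}(M)(z,w)`. -/
def Ei (W : EuclideanSpace ℝ (Fin d) → ℝ) (M : (Fin (T + 1) → {x // x ∈ S}) → ℝ)
    (i : Fin T) (y : EuclideanSpace ℝ (Fin d)) : ℝ :=
  ∑ z : {x // x ∈ S}, ∑ w : {x // x ∈ S},
    (inner ℝ (gradient W ((z : EuclideanSpace ℝ (Fin d)) - y))
      ((w : EuclideanSpace ℝ (Fin d)) - (z : EuclideanSpace ℝ (Fin d))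
        + (1 / (T : ℝ)) • convW W M i.castSucc (z : EuclideanSpace ℝ (Fin d))) : ℝ)
    * margPair M i z w

/-- `E(M)(x_0,…,x_T) = Σ_{i=0}^{T-1} E_i(x_i)`. -/
def Etens (W : EuclideanSpace ℝ (Fin d) → ℝ) (M : (Fin (T + 1) → {x // x ∈ S}) → ℝ)
    (x : Fin (T + 1) → {x // x ∈ S}) : ℝ :=
  ∑ i : Fin T, Ei W M i (x i.castSucc : EuclideanSpace ℝ (Fin d))

section

variable {ι F : Type*} [Fintype ι] [NormedAddCommGroup F] [NormedSpace ℝ F]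

theorem gradient_apply_eq_fderiv_single [DecidableEq ι] (f : EuclideanSpace ℝ ι → ℝ)
    (M : EuclideanSpace ℝ ι) (x : ι) :
    gradient f M x = fderiv ℝ f M (EuclideanSpace.single x 1) := by
  rw [← InnerProductSpace.toDual_symm_apply (𝕜 := ℝ), EuclideanSpace.inner_single_right]
  simp [gradient]

def weightedSumCLM (v : ι → F) : EuclideanSpace ℝ ι →L[ℝ] F :=
  ∑ x, (EuclideanSpace.proj x).smulRight (v x)

theorem weightedSumCLM_apply (v : ι → F) (N : EuclideanSpace ℝ ι) :
    weightedSumCLM v N = ∑ x, N x • v x := by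
  simp [weightedSumCLM]

theorem weightedSumCLM_single [DecidableEq ι] (v : ι → F) (y : ι) :
    weightedSumCLM v (EuclideanSpace.single y 1) = v y := by
  simp [weightedSumCLM_apply, ite_smul]

local notation "Path" => Fin (T + 1) → {x // x ∈ S}

theorem sum_marg_smul (M : Path → ℝ) (i : Fin (T + 1)) (v : {x // x ∈ S} → F) :
    ∑ z, marg M i z • v z = ∑ x : Path, M x • v (x i) := by
  simp only [marg, Finset.sum_smul, ite_smul, zero_smul]
  rw [Finset.sum_comm]
  simp

theorem sum_sum_mul_margPair (M : Path → ℝ) (i : Fin T) (f : {x // x ∈ S} → {x // x ∈ S} → ℝ) :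
    ∑ z, ∑ w, f z w * margPair M i z w = ∑ x : Path, f (x i.castSucc) (x i.succ) * M x := by
  simp only [margPair, Finset.mul_sum, mul_ite, mul_zero, ite_and]
  rw [Finset.sum_congr rfl fun z _ => Finset.sum_comm, Finset.sum_comm]
  simp

theorem convW_eq_weightedSumCLM (W : EuclideanSpace ℝ (Fin d) → ℝ)
    (N : EuclideanSpace ℝ Path) (i : Fin (T + 1)) (y : EuclideanSpace ℝ (Fin d)) :
    convW W N i y = weightedSumCLM (fun x : Path => gradient W (y - x i)) N := by
  rw [convW, sum_marg_smul, weightedSumCLM_apply]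

def residual (W : EuclideanSpace ℝ (Fin d) → ℝ) (M : Path → ℝ) (x : Path) (i : Fin T) :
    EuclideanSpace ℝ (Fin d) :=
  (x i.succ : EuclideanSpace ℝ (Fin d)) - x i.castSucc
    + (1 / (T : ℝ)) • convW W M i.castSucc (x i.castSucc)

theorem costC_eq_sum_residual (W : EuclideanSpace ℝ (Fin d) → ℝ) (M : Path → ℝ) (x : Path) :
    costC W M x = ∑ i, (T : ℝ) / 2 * ‖residual W M x i‖ ^ 2 := rfl

theorem Ei_eq_sum_residual (W : EuclideanSpace ℝ (Fin d) → ℝ) (M : Path → ℝ) (i : Fin T)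
    (y : EuclideanSpace ℝ (Fin d)) :
    Ei W M i y = ∑ x : Path,
      inner ℝ (gradient W ((x i.castSucc : EuclideanSpace ℝ (Fin d)) - y)) (residual W M x i)
        * M x :=
  sum_sum_mul_margPair M i fun z w => inner ℝ (gradient W ((z : EuclideanSpace ℝ (Fin d)) - y))
    ((w : EuclideanSpace ℝ (Fin d)) - z + (1 / (T : ℝ)) • convW W M i.castSucc z)

theorem hasFDerivAt_residual (W : EuclideanSpace ℝ (Fin d) → ℝ) (M : EuclideanSpace ℝ Path)
    (x : Path) (i : Fin T) :
    HasFDerivAt (fun N : EuclideanSpace ℝ Path => residual W N x i)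
      ((1 / (T : ℝ)) • weightedSumCLM fun z : Path =>
        gradient W ((x i.castSucc : EuclideanSpace ℝ (Fin d)) - z i.castSucc)) M := by
  simp only [residual, convW_eq_weightedSumCLM]
  exact (((weightedSumCLM _).hasFDerivAt (x := M)).const_smul (1 / (T : ℝ))).const_add _

theorem hasFDerivAt_costC (W : EuclideanSpace ℝ (Fin d) → ℝ) (M : EuclideanSpace ℝ Path)
    (x : Path) :
    HasFDerivAt (fun N : EuclideanSpace ℝ Path => costC W N x)
      (∑ i, ((T : ℝ) / 2) • (2 • (innerSL ℝ (residual W M x i)).comp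
        ((1 / (T : ℝ)) • weightedSumCLM fun z : Path =>
          gradient W ((x i.castSucc : EuclideanSpace ℝ (Fin d)) - z i.castSucc)))) M := by
  simp only [costC_eq_sum_residual]
  exact HasFDerivAt.fun_sum fun i _ => ((hasFDerivAt_residual W M x i).norm_sq).const_mul _

theorem fderiv_costC_single (W : EuclideanSpace ℝ (Fin d) → ℝ) (M : EuclideanSpace ℝ Path)
    (x y : Path) :
    fderiv ℝ (fun N : EuclideanSpace ℝ Path => costC W N x) M (EuclideanSpace.single y 1)
      = ∑ i, inner ℝ (gradient W ((x i.castSucc : EuclideanSpace ℝ (Fin d)) - y i.castSucc))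
          (residual W M x i) := by
  rw [(hasFDerivAt_costC W M x).fderiv, sum_apply]
  refine Finset.sum_congr rfl fun i _ => ?_
  have hT : (T : ℝ) ≠ 0 := Nat.cast_ne_zero.mpr i.pos.ne'
  simp only [smul_apply, ContinuousLinearMap.comp_apply, weightedSumCLM_single,
    innerSL_apply_apply, inner_smul_right, smul_eq_mul, nsmul_eq_mul, Nat.cast_ofNat]
  rw [real_inner_comm]
  field_simp

theorem hasFDerivAt_Ffun (W : EuclideanSpace ℝ (Fin d) → ℝ) (M : EuclideanSpace ℝ Path) :
    HasFDerivAt (fun N : EuclideanSpace ℝ Path => Ffun W N)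
      (∑ x : Path, (costC W M x • EuclideanSpace.proj x
        + M x • fderiv ℝ (fun N : EuclideanSpace ℝ Path => costC W N x) M)) M :=
  HasFDerivAt.fun_sum fun x _ =>
    (hasFDerivAt_costC W M x).differentiableAt.hasFDerivAt.mul
      (EuclideanSpace.proj (𝕜 := ℝ) x).hasFDerivAt

theorem fderiv_Ffun_single (W : EuclideanSpace ℝ (Fin d) → ℝ) (M : EuclideanSpace ℝ Path)
    (y : Path) :
    fderiv ℝ (fun N : EuclideanSpace ℝ Path => Ffun W N) M (EuclideanSpace.single y 1)
      = costC W M y + Etens W M y := by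
  rw [(hasFDerivAt_Ffun W M).fderiv]
  simp only [sum_apply, add_apply, smul_apply, smul_eq_mul, Finset.sum_add_distrib,
    fderiv_costC_single, Etens, Ei_eq_sum_residual]
  congr 1
  · simp
  · simp only [Finset.mul_sum]
    rw [Finset.sum_comm]
    simp only [mul_comm]

end

theorem statement_0_general
    (W : EuclideanSpace ℝ (Fin d) → ℝ)
    (M : EuclideanSpace ℝ (Fin (T + 1) → {x // x ∈ S})) :
    DifferentiableAt ℝ
      (fun N : EuclideanSpace ℝ (Fin (T + 1) → {x // x ∈ S}) => Ffun W N) M ∧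
    ∀ x : Fin (T + 1) → {x // x ∈ S},
      gradient (fun N : EuclideanSpace ℝ (Fin (T + 1) → {x // x ∈ S}) => Ffun W N) M x
        = costC W M x + Etens W M x :=
  ⟨(hasFDerivAt_Ffun W M).differentiableAt, fun x => by
    rw [gradient_apply_eq_fderiv_single, fderiv_Ffun_single]⟩

/-- `F` is differentiable at every tensor `M`, with gradient
`∇F(M) = C(M) + E(M)`. -/
theorem statement_0 (hT : 1 ≤ T) (hS : S.Nonempty)
    (W : EuclideanSpace ℝ (Fin d) → ℝ) (hW : ContDiff ℝ 1 W)
    (M : EuclideanSpace ℝ (Fin (T + 1) → {x // x ∈ S})) :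
    DifferentiableAt ℝ
      (fun N : EuclideanSpace ℝ (Fin (T + 1) → {x // x ∈ S}) => Ffun W N) M ∧
    ∀ x : Fin (T + 1) → {x // x ∈ S},
      gradient (fun N : EuclideanSpace ℝ (Fin (T + 1) → {x // x ∈ S}) => Ffun W N) M x
        = costC W M x + Etens W M x :=
  statement_0_general W M

end Stmt0
end
end

section
/- Suppose Π : [0,1] → ℝ^{d×d} is differentiable, symmetric-matrix valued, and satisfies the Riccati equation Π̇(t) − Π(t) a Π(t) + Q + ĀᵀΠ(t) + Π(t)Ā = 0 for all t ∈ [0,1], and suppose Σ : [0,1] → ℝ^{d×d} is differentiable, with Σ(t) invertible for every t, and satisfies the Lyapunov equation Σ̇(t) − (Ā − aΠ(t))Σ(t) − Σ(t)(Ā − aΠ(t))ᵀ − ε a = 0 for all t ∈ [0,1]. Then H(t) := ε Σ(t)⁻¹ − Π(t) satisfies the Riccati equation Ḣ(t) + H(t) a H(t) − Q + ĀᵀH(t) + H(t)Ā = 0 for all t ∈ [0,1]. -/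
open Matrix

/-!
Differentiating `Σ Σ⁻¹ = 1` gives `d/dt Σ⁻¹ = -Σ⁻¹ Σ̇ Σ⁻¹`, and conjugating the Lyapunov equation
by `Σ⁻¹` turns it into `d/dt Σ⁻¹ = -Σ⁻¹X - XᵀΣ⁻¹ - ε Σ⁻¹aΣ⁻¹` with `X = Ā - aΠ`. Substituting this
and the Riccati equation for `Π̇` into `Ḣ + HaH - Q + ĀᵀH + HĀ`, every term cancels.
-/

section LinftyOp

-- All norms on matrices give the same derivatives; the ℓ∞ operator norm is chosen because it
-- makes `Matrix n n 𝕜` a normed algebra, as `hasFDerivAt_ringInverse` needs.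
attribute [local instance] Matrix.linftyOpNormedRing Matrix.linftyOpNormedAlgebra

variable {𝕜 n : Type*} [NontriviallyNormedField 𝕜] [Fintype n] [DecidableEq n]

theorem Matrix.hasDerivAt_of_hasDerivAt_apply
    {A : 𝕜 → Matrix n n 𝕜} {A' : Matrix n n 𝕜} {t : 𝕜}
    (hA : ∀ i j, HasDerivAt (fun s => A s i j) (A' i j) t) :
    HasDerivAt A A' t := by
  have h : HasDerivAt (fun s => ∑ i, ∑ j, A s i j • single i j (1 : 𝕜))
      (∑ i, ∑ j, A' i j • single i j (1 : 𝕜)) t :=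
    .fun_sum fun i _ => .fun_sum fun j _ => (hA i j).smul_const _
  simpa only [smul_single, smul_eq_mul, mul_one, ← matrix_eq_sum_single] using h

variable [CompleteSpace 𝕜]

theorem HasDerivAt.matrix_apply {A : 𝕜 → Matrix n n 𝕜} {A' : Matrix n n 𝕜} {t : 𝕜}
    (hA : HasDerivAt A A' t) (i j : n) :
    HasDerivAt (fun s => A s i j) (A' i j) t :=
  (entryLinearMap 𝕜 𝕜 i j).toContinuousLinearMap.hasFDerivAt.comp_hasDerivAt t hA

theorem HasDerivAt.matrix_inv
    {A : 𝕜 → Matrix n n 𝕜} {A' : Matrix n n 𝕜} {t : 𝕜}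
    (hA : HasDerivAt A A' t) (hAt : IsUnit (A t)) :
    HasDerivAt (fun s => (A s)⁻¹) (-((A t)⁻¹ * A' * (A t)⁻¹)) t := by
  -- The operator-norm uniformity is the product one only up to unfolding, so instance search
  -- does not find completeness by itself.
  have : HasSummableGeomSeries (Matrix n n 𝕜) :=
    @instHasSummableGeomSeriesOfCompleteSpace _ _ (FiniteDimensional.complete 𝕜 _)
  have h := (hasFDerivAt_ringInverse (𝕜 := 𝕜) hAt.unit).comp_hasDerivAt_of_eq t hA
    hAt.unit_spec.symm
  simp only [Function.comp_def, ← nonsing_inv_eq_ringInverse, coe_units_inv, hAt.unit_spec] at h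
  exact h

end LinftyOp

theorem Matrix.hasDerivAt_inv_apply {𝕜 n : Type*} [NontriviallyNormedField 𝕜] [CompleteSpace 𝕜]
    [Fintype n] [DecidableEq n] {A : 𝕜 → Matrix n n 𝕜} {A' : Matrix n n 𝕜} {t : 𝕜}
    (hA : ∀ i j, HasDerivAt (fun s => A s i j) (A' i j) t) (hAt : IsUnit (A t)) (i j : n) :
    HasDerivAt (fun s => (A s)⁻¹ i j) ((-((A t)⁻¹ * A' * (A t)⁻¹)) i j) t :=
  ((hasDerivAt_of_hasDerivAt_apply hA).matrix_inv hAt).matrix_apply i j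

section Algebra

variable {n R : Type*} [Fintype n] [DecidableEq n] [CommRing R]

theorem Matrix.inv_mul_add_mul_add_mul_inv {S : Matrix n n R} (hS : IsUnit S)
    (X Y B : Matrix n n R) :
    S⁻¹ * (X * S + S * Y + B) * S⁻¹ = S⁻¹ * X + Y * S⁻¹ + S⁻¹ * B * S⁻¹ := by
  have hdet : IsUnit S.det := (isUnit_iff_isUnit_det S).mp hS
  simp only [mul_add, add_mul, mul_assoc, mul_nonsing_inv _ hdet, mul_one,
    nonsing_inv_mul_cancel_left _ _ hdet]

theorem Matrix.riccati_smul_inv_sub_of_lyapunov (ε : R) {a A Q P P' S S' : Matrix n n R}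
    (ha : a.IsSymm) (hP : P.IsSymm) (hS : IsUnit S)
    (hRiccati : P' - P * a * P + Q + Aᵀ * P + P * A = 0)
    (hLyapunov : S' - (A - a * P) * S - S * (A - a * P)ᵀ - ε • a = 0) :
    (ε • -(S⁻¹ * S' * S⁻¹) - P') + (ε • S⁻¹ - P) * a * (ε • S⁻¹ - P) - Q
      + Aᵀ * (ε • S⁻¹ - P) + (ε • S⁻¹ - P) * A = 0 := by
  have hS' : S' = (A - a * P) * S + S * (Aᵀ - P * a) + ε • a := by
    rw [← sub_eq_zero, ← hLyapunov, transpose_sub, transpose_mul, ha.eq, hP.eq]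
    abel
  have hP' : P' = P * a * P - Q - Aᵀ * P - P * A := by
    rw [← sub_eq_zero, ← hRiccati]
    abel
  rw [hS', inv_mul_add_mul_add_mul_inv hS, hP']
  simp only [mul_sub, sub_mul, Matrix.mul_smul, Matrix.smul_mul, mul_assoc]
  module

end Algebra

theorem statement_5_general {d p : ℕ} (ε : ℝ)
    (σm : Matrix (Fin d) (Fin p) ℝ)
    (Abar Q : Matrix (Fin d) (Fin d) ℝ)
    (Pm Pm' Sm Sm' : ℝ → Matrix (Fin d) (Fin d) ℝ)
    (hPderiv : ∀ t ∈ Set.Icc (0 : ℝ) 1, ∀ i j, HasDerivAt (fun s => Pm s i j) (Pm' t i j) t)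
    (hPsymm : ∀ t ∈ Set.Icc (0 : ℝ) 1, (Pm t).IsSymm)
    (hRiccati : ∀ t ∈ Set.Icc (0 : ℝ) 1,
      Pm' t - Pm t * (σm * σmᵀ) * Pm t + Q + Abarᵀ * Pm t + Pm t * Abar = 0)
    (hSderiv : ∀ t ∈ Set.Icc (0 : ℝ) 1, ∀ i j, HasDerivAt (fun s => Sm s i j) (Sm' t i j) t)
    (hSinv : ∀ t ∈ Set.Icc (0 : ℝ) 1, IsUnit (Sm t))
    (hLyapunov : ∀ t ∈ Set.Icc (0 : ℝ) 1,
      Sm' t - (Abar - (σm * σmᵀ) * Pm t) * Sm t - Sm t * (Abar - (σm * σmᵀ) * Pm t)ᵀ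
        - ε • (σm * σmᵀ) = 0) :
    ∃ H' : ℝ → Matrix (Fin d) (Fin d) ℝ,
      (∀ t ∈ Set.Icc (0 : ℝ) 1, ∀ i j,
        HasDerivAt (fun s => (ε • (Sm s)⁻¹ - Pm s) i j) (H' t i j) t) ∧
      ∀ t ∈ Set.Icc (0 : ℝ) 1,
        H' t + (ε • (Sm t)⁻¹ - Pm t) * (σm * σmᵀ) * (ε • (Sm t)⁻¹ - Pm t) - Q
          + Abarᵀ * (ε • (Sm t)⁻¹ - Pm t) + (ε • (Sm t)⁻¹ - Pm t) * Abar = 0 := by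
  refine ⟨fun t => ε • -((Sm t)⁻¹ * Sm' t * (Sm t)⁻¹) - Pm' t, fun t ht i j => ?_, fun t ht => ?_⟩
  · exact ((hasDerivAt_inv_apply (hSderiv t ht) (hSinv t ht) i j).const_smul ε).sub
      (hPderiv t ht i j)
  · exact riccati_smul_inv_sub_of_lyapunov ε (by rw [IsSymm, transpose_mul, transpose_transpose])
      (hPsymm t ht) (hSinv t ht) (hRiccati t ht) (hLyapunov t ht)

/-- If the symmetric-matrix valued `Π` solves the Riccati equation
`Π̇ - Π a Π + Q + ĀᵀΠ + ΠĀ = 0` on `[0,1]` and the invertible-matrix valued `Σ` solves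
the Lyapunov equation `Σ̇ - (Ā - aΠ)Σ - Σ(Ā - aΠ)ᵀ - εa = 0` on `[0,1]`, where
`a = σσᵀ`, then `H(t) = ε Σ(t)⁻¹ - Π(t)` satisfies the Riccati equation
`Ḣ + H a H - Q + ĀᵀH + HĀ = 0` on `[0,1]` (derivatives are taken entrywise). -/
theorem statement_5 {d p : ℕ} (ε : ℝ) (hε : 0 < ε)
    (σm : Matrix (Fin d) (Fin p) ℝ)
    (Abar Q : Matrix (Fin d) (Fin d) ℝ) (hQ : Q.IsSymm)
    (Pm Pm' Sm Sm' : ℝ → Matrix (Fin d) (Fin d) ℝ)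
    (hPderiv : ∀ t ∈ Set.Icc (0 : ℝ) 1, ∀ i j, HasDerivAt (fun s => Pm s i j) (Pm' t i j) t)
    (hPsymm : ∀ t ∈ Set.Icc (0 : ℝ) 1, (Pm t).IsSymm)
    (hRiccati : ∀ t ∈ Set.Icc (0 : ℝ) 1,
      Pm' t - Pm t * (σm * σmᵀ) * Pm t + Q + Abarᵀ * Pm t + Pm t * Abar = 0)
    (hSderiv : ∀ t ∈ Set.Icc (0 : ℝ) 1, ∀ i j, HasDerivAt (fun s => Sm s i j) (Sm' t i j) t)
    (hSinv : ∀ t ∈ Set.Icc (0 : ℝ) 1, IsUnit (Sm t))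
    (hLyapunov : ∀ t ∈ Set.Icc (0 : ℝ) 1,
      Sm' t - (Abar - (σm * σmᵀ) * Pm t) * Sm t - Sm t * (Abar - (σm * σmᵀ) * Pm t)ᵀ
        - ε • (σm * σmᵀ) = 0) :
    ∃ H' : ℝ → Matrix (Fin d) (Fin d) ℝ,
      (∀ t ∈ Set.Icc (0 : ℝ) 1, ∀ i j,
        HasDerivAt (fun s => (ε • (Sm s)⁻¹ - Pm s) i j) (H' t i j) t) ∧
      ∀ t ∈ Set.Icc (0 : ℝ) 1,
        H' t + (ε • (Sm t)⁻¹ - Pm t) * (σm * σmᵀ) * (ε • (Sm t)⁻¹ - Pm t) - Q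
          + Abarᵀ * (ε • (Sm t)⁻¹ - Pm t) + (ε • (Sm t)⁻¹ - Pm t) * Abar = 0 :=
  statement_5_general ε σm Abar Q Pm Pm' Sm Sm' hPderiv hPsymm hRiccati hSderiv hSinv hLyapunov
end
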